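/- Let q_k^{α,β} be defined by (∂/∂ξ - ∂/∂ζ)^k(ξ^{α+k}ζ^{β+k}) = ξ^α ζ^β q_k^{α,β}(ξ,ζ), and define the Rankin–Cohen-type symbols b_{λ,μ}^{(k)} recursively by b^{(0)}_{λ,μ} = 1 and b_{λ,μ}^{(k)} = i[(−μξ + λζ) b_{λ+1,μ+1}^{(k-1)} + ξζ(∂/∂ξ − ∂/∂ζ) b_{λ+1,μ+1}^{(k-1)}]. Then b_{λ,μ}^{(k)}(ξ,ζ) = q_k^{λ−1,μ−1}(iξ, iζ) = i^k q_k^{λ−1,μ−1}(ξ,ζ). -/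

import Mathlib

/-!
Applying `∂_ξ − ∂_ζ` to `ξ^(α+1) ζ^(β+1) P` gives `ξ^α ζ^β` times
`(α+1)ζP − (β+1)ξP + ξζ(∂_ξ − ∂_ζ)P`, so `q_{k+1}^{α,β}` is obtained from `q_k^{α+1,β+1}` by
the recursion defining `b` with `(λ, μ) = (α+1, β+1)`, except for the factor `i`. Hence
`b_{λ,μ}^{(k)} = i^k q_k^{λ-1,μ-1}` as polynomials, and homogeneity turns `i^k` into the
substitution `(ξ, ζ) ↦ (iξ, iζ)`. Polynomial identities are read off from the positive quadrant,
where the Rodrigues formula is stated.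
-/

open MvPolynomial Complex

/-- The operator ∂/∂ξ - ∂/∂ζ acting on functions of two real variables. -/
noncomputable def Dop (f : ℝ → ℝ → ℂ) : ℝ → ℝ → ℂ :=
  fun x y => deriv (fun u => f u y) x - deriv (fun v => f x v) y

namespace MvPolynomial

theorem IsHomogeneous.eval_smul {R σ : Type*} [CommSemiring R] {φ : MvPolynomial σ R} {n : ℕ}
    (hφ : φ.IsHomogeneous n) (c : R) (v : σ → R) : eval (c • v) φ = c ^ n * eval v φ := by
  conv_lhs => rw [φ.as_sum]
  conv_rhs => rw [φ.as_sum]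
  simp only [map_sum, eval_monomial, Finset.mul_sum, Pi.smul_apply, smul_eq_mul, mul_pow,
    Finsupp.prod_mul]
  refine Finset.sum_congr rfl fun d hd => ?_
  rw [hφ.degree_eq_sum_deg_support hd, Finsupp.prod, Finset.prod_pow_eq_pow_sum]
  ring

theorem hasDerivAt_eval_update {𝕜 σ : Type*} [NontriviallyNormedField 𝕜] [DecidableEq σ]
    (p : MvPolynomial σ 𝕜) (v : σ → 𝕜) (i : σ) :
    HasDerivAt (fun t => eval (Function.update v i t) p) (eval v (pderiv i p)) (v i) := by
  induction p using MvPolynomial.induction_on with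
  | C a => simpa using hasDerivAt_const (v i) a
  | add p₁ p₂ h₁ h₂ => simpa only [map_add] using h₁.fun_add h₂
  | mul_X p j ih =>
    rw [pderiv_mul, map_add, map_mul, map_mul]
    by_cases hj : j = i
    · subst hj
      simpa using ih.fun_mul (hasDerivAt_id' (v j))
    · simpa [hj, pderiv_X_of_ne hj] using ih.mul_const (v j)

end MvPolynomial

theorem hasDerivAt_ofReal_cpow_of_pos {x : ℝ} (hx : 0 < x) (a : ℂ) :
    HasDerivAt (fun u : ℝ => (u : ℂ) ^ a) (a * (x : ℂ) ^ (a - 1)) x :=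
  ((hasDerivAt_id (x : ℂ)).cpow_const (by simp [Complex.mem_slitPlane_iff, hx])).comp_ofReal
    |>.congr_deriv (by simp)

theorem hasDerivAt_eval_fst (p : MvPolynomial (Fin 2) ℂ) (x y : ℝ) :
    HasDerivAt (fun u : ℝ => eval ![(u : ℂ), (y : ℂ)] p)
      (eval ![(x : ℂ), (y : ℂ)] (pderiv 0 p)) x := by
  have hupd (u : ℂ) : Function.update ![(x : ℂ), (y : ℂ)] 0 u = ![u, (y : ℂ)] := by
    ext i; fin_cases i <;> rfl
  simpa only [hupd] using (hasDerivAt_eval_update p ![(x : ℂ), (y : ℂ)] 0).comp_ofReal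

theorem hasDerivAt_eval_snd (p : MvPolynomial (Fin 2) ℂ) (x y : ℝ) :
    HasDerivAt (fun v : ℝ => eval ![(x : ℂ), (v : ℂ)] p)
      (eval ![(x : ℂ), (y : ℂ)] (pderiv 1 p)) y := by
  have hupd (v : ℂ) : Function.update ![(x : ℂ), (y : ℂ)] 1 v = ![(x : ℂ), v] := by
    ext i; fin_cases i <;> rfl
  simpa only [hupd] using (hasDerivAt_eval_update p ![(x : ℂ), (y : ℂ)] 1).comp_ofReal

theorem Dop_congr_of_pos {f g : ℝ → ℝ → ℂ} (h : ∀ x y : ℝ, 0 < x → 0 < y → f x y = g x y)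
    {x y : ℝ} (hx : 0 < x) (hy : 0 < y) : Dop f x y = Dop g x y := by
  have h₁ : (fun u => f u y) =ᶠ[nhds x] fun u => g u y :=
    Filter.eventually_of_mem (Ioi_mem_nhds hx) fun u hu => h u y hu hy
  have h₂ : (fun v => f x v) =ᶠ[nhds y] fun v => g x v :=
    Filter.eventually_of_mem (Ioi_mem_nhds hy) fun v hv => h x v hx hv
  simp only [Dop, h₁.deriv_eq, h₂.deriv_eq]

noncomputable def rodriguesStep (α β : ℂ) (P : MvPolynomial (Fin 2) ℂ) : MvPolynomial (Fin 2) ℂ :=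
  (C (α + 1) * X 1 - C (β + 1) * X 0) * P + X 0 * X 1 * (pderiv 0 P - pderiv 1 P)

theorem Dop_cpow_mul_eval (α β : ℂ) (P : MvPolynomial (Fin 2) ℂ) {x y : ℝ} (hx : 0 < x)
    (hy : 0 < y) :
    Dop (fun u v => (u : ℂ) ^ (α + 1) * (v : ℂ) ^ (β + 1) * eval ![(u : ℂ), (v : ℂ)] P) x y
      = (x : ℂ) ^ α * (y : ℂ) ^ β * eval ![(x : ℂ), (y : ℂ)] (rodriguesStep α β P) := by
  have h₁ := ((hasDerivAt_ofReal_cpow_of_pos hx (α + 1)).mul_const ((y : ℂ) ^ (β + 1))).fun_mul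
    (hasDerivAt_eval_fst P x y)
  have h₂ := ((hasDerivAt_ofReal_cpow_of_pos hy (β + 1)).const_mul ((x : ℂ) ^ (α + 1))).fun_mul
    (hasDerivAt_eval_snd P x y)
  have hx' : (x : ℂ) ^ (α + 1) = (x : ℂ) ^ α * x := by
    rw [cpow_add _ _ (by exact_mod_cast hx.ne'), cpow_one]
  have hy' : (y : ℂ) ^ (β + 1) = (y : ℂ) ^ β * y := by
    rw [cpow_add _ _ (by exact_mod_cast hy.ne'), cpow_one]
  rw [Dop, h₁.deriv, h₂.deriv]
  simp only [add_sub_cancel_right, hx', hy', rodriguesStep, map_add, map_sub, map_mul, eval_C,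
    eval_X, Matrix.cons_val_zero, Matrix.cons_val_one]
  ring

theorem eq_of_cpow_mul_eval_eq {p p' : MvPolynomial (Fin 2) ℂ} (α β : ℂ)
    (h : ∀ x y : ℝ, 0 < x → 0 < y → (x : ℂ) ^ α * (y : ℂ) ^ β * eval ![(x : ℂ), (y : ℂ)] p
      = (x : ℂ) ^ α * (y : ℂ) ^ β * eval ![(x : ℂ), (y : ℂ)] p') :
    p = p' := by
  refine funext_set (fun _ => ofReal '' Set.Ioi 0)
    (fun _ => (Set.Ioi_infinite 0).image ofReal_injective.injOn) fun v hv => ?_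
  obtain ⟨x, hx : 0 < x, hvx⟩ := hv 0 trivial
  obtain ⟨y, hy : 0 < y, hvy⟩ := hv 1 trivial
  obtain rfl : v = ![(x : ℂ), (y : ℂ)] := by ext i; fin_cases i <;> simp [hvx, hvy]
  have hxy : (x : ℂ) ^ α * (y : ℂ) ^ β ≠ 0 := by
    simp [cpow_eq_zero_iff, hx.ne', hy.ne']
  exact mul_left_cancel₀ hxy (h x y hx hy)

def IsRodriguesFamily (q : ℂ → ℂ → ℕ → MvPolynomial (Fin 2) ℂ) : Prop :=
  ∀ (α β : ℂ) (k : ℕ) (x y : ℝ), 0 < x → 0 < y →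
    (Dop^[k] (fun ξ ζ => (ξ : ℂ) ^ (α + k) * (ζ : ℂ) ^ (β + k))) x y
      = (x : ℂ) ^ α * (y : ℂ) ^ β * eval ![(x : ℂ), (y : ℂ)] (q α β k)

namespace IsRodriguesFamily

variable {q : ℂ → ℂ → ℕ → MvPolynomial (Fin 2) ℂ} (hq : IsRodriguesFamily q)
include hq

theorem apply_zero (α β : ℂ) : q α β 0 = 1 :=
  eq_of_cpow_mul_eval_eq α β fun x y hx hy => by simpa using (hq α β 0 x y hx hy).symm

theorem apply_succ (α β : ℂ) (k : ℕ) :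
    q α β (k + 1) = rodriguesStep α β (q (α + 1) (β + 1) k) := by
  refine eq_of_cpow_mul_eval_eq α β fun x y hx hy => ?_
  calc (x : ℂ) ^ α * (y : ℂ) ^ β * eval ![(x : ℂ), (y : ℂ)] (q α β (k + 1))
      = Dop (Dop^[k] fun ξ ζ => (ξ : ℂ) ^ (α + 1 + k) * (ζ : ℂ) ^ (β + 1 + k)) x y := by
        rw [← hq α β (k + 1) x y hx hy, Function.iterate_succ_apply']
        push_cast
        simp only [add_assoc, add_comm (1 : ℂ)]
    _ = Dop (fun u v => (u : ℂ) ^ (α + 1) * (v : ℂ) ^ (β + 1)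
          * eval ![(u : ℂ), (v : ℂ)] (q (α + 1) (β + 1) k)) x y :=
        Dop_congr_of_pos (hq (α + 1) (β + 1) k) hx hy
    _ = _ := Dop_cpow_mul_eval α β _ hx hy

end IsRodriguesFamily

theorem rankinCohen_symbol_eq_I_pow_mul {q b : ℂ → ℂ → ℕ → MvPolynomial (Fin 2) ℂ}
    (hq : IsRodriguesFamily q) (hb0 : ∀ lam mu : ℂ, b lam mu 0 = 1)
    (hbrec : ∀ (lam mu : ℂ) (k : ℕ),
      b lam mu (k + 1)
        = C I * ((C (-mu) * X 0 + C lam * X 1) * b (lam + 1) (mu + 1) k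
            + X 0 * X 1 * (pderiv 0 (b (lam + 1) (mu + 1) k) - pderiv 1 (b (lam + 1) (mu + 1) k))))
    (k : ℕ) (lam mu : ℂ) : b lam mu k = C (I ^ k) * q (lam - 1) (mu - 1) k := by
  induction k generalizing lam mu with
  | zero => simp [hb0, hq.apply_zero]
  | succ k ih =>
    rw [hbrec, ih, hq.apply_succ, rodriguesStep]
    simp only [add_sub_cancel_right, sub_add_cancel, pderiv_C_mul, map_neg, pow_succ, map_mul]
    ring

theorem stmt18 (q : ℂ → ℂ → ℕ → MvPolynomial (Fin 2) ℂ)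
    (hqhom : ∀ (α β : ℂ) (k : ℕ), (q α β k).IsHomogeneous k)
    -- `q α β k = q_k^{α,β}` defined by the Rodrigues-type formula
    (hq : ∀ (α β : ℂ) (k : ℕ) (x y : ℝ), 0 < x → 0 < y →
      (Dop^[k] (fun ξ ζ => (ξ : ℂ) ^ (α + k) * (ζ : ℂ) ^ (β + k))) x y
        = (x : ℂ) ^ α * (y : ℂ) ^ β * MvPolynomial.eval ![(x : ℂ), (y : ℂ)] (q α β k))
    (b : ℂ → ℂ → ℕ → MvPolynomial (Fin 2) ℂ)
    (hb0 : ∀ lam mu : ℂ, b lam mu 0 = 1)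
    -- the Rankin–Cohen recursion for the symbols
    (hbrec : ∀ (lam mu : ℂ) (k : ℕ),
      b lam mu (k + 1)
        = C Complex.I *
            ((C (-mu) * X 0 + C lam * X 1) * b (lam + 1) (mu + 1) k
              + X 0 * X 1 *
                  (pderiv 0 (b (lam + 1) (mu + 1) k) - pderiv 1 (b (lam + 1) (mu + 1) k)))) :
    ∀ (lam mu : ℂ) (k : ℕ) (ξ ζ : ℂ),
      MvPolynomial.eval ![ξ, ζ] (b lam mu k)
          = MvPolynomial.eval ![Complex.I * ξ, Complex.I * ζ] (q (lam - 1) (mu - 1) k)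
        ∧ MvPolynomial.eval ![Complex.I * ξ, Complex.I * ζ] (q (lam - 1) (mu - 1) k)
          = Complex.I ^ k * MvPolynomial.eval ![ξ, ζ] (q (lam - 1) (mu - 1) k) := by
  intro lam mu k ξ ζ
  have hscale : eval ![I * ξ, I * ζ] (q (lam - 1) (mu - 1) k)
      = I ^ k * eval ![ξ, ζ] (q (lam - 1) (mu - 1) k) := by
    simpa using (hqhom (lam - 1) (mu - 1) k).eval_smul I ![ξ, ζ]
  refine ⟨?_, hscale⟩
  rw [rankinCohen_symbol_eq_I_pow_mul hq hb0 hbrec, eval_mul, eval_C, hscale]
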